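/- arXiv:0907.1980 — 3 statements merged into one kernel-verified Lean document; each statement's English description precedes it below -/
import Mathlib

section
/- Let ε > 0 and let T be a connected component of Λ_{S,ε}(A). Then for every z ∈ ℂ^s with ‖z‖ ≤ ε, the component T contains at least one eigenvalue of A + M_S(z). In particular (taking z = 0), every connected component of Λ_{S,ε}(A) contains an eigenvalue of A. -/
open Matrix Polynomial Set

noncomputable def MS {n : ℕ} (S : Finset (Fin n × Fin n))
    (z : EuclideanSpace ℂ {p : Fin n × Fin n // p ∈ S}) : Matrix (Fin n) (Fin n) ℂ :=
  fun i j => if h : (i, j) ∈ S then z ⟨(i, j), h⟩ else 0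

/-- The structured ε-pseudospectrum `Λ_{S,ε}(A)`. -/
noncomputable def structPseudo {n : ℕ} (A : Matrix (Fin n) (Fin n) ℂ)
    (S : Finset (Fin n × Fin n)) (ε : ℝ) : Set ℂ :=
  ⋃ z ∈ {z : EuclideanSpace ℂ {p : Fin n × Fin n // p ∈ S} | ‖z‖ ≤ ε},
    spectrum ℂ (A + MS S z)

/-- The strict structured ε-pseudospectrum `Λ'_{S,ε}(A)`. -/
noncomputable def structPseudoStrict {n : ℕ} (A : Matrix (Fin n) (Fin n) ℂ)
    (S : Finset (Fin n × Fin n)) (ε : ℝ) : Set ℂ :=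
  ⋃ z ∈ {z : EuclideanSpace ℂ {p : Fin n × Fin n // p ∈ S} | ‖z‖ < ε},
    spectrum ℂ (A + MS S z)

/-!
The set of parameters `z` in the ball `‖z‖ ≤ ε` for which `A + M_S(z)` has an eigenvalue in a
relatively clopen subset `U` of `Λ = Λ_{S,ε}(A)` is closed, because the graph
`{(z, μ) | μ ∈ σ(A + M_S(z))}` over the compact ball is compact, and open, because eigenvalues of
a matrix do not disappear under small perturbations (`|det(μ - M)|` is the product of the distances
from `μ` to the eigenvalues of `M`). The ball being connected, this set is empty or everything.
A connected component of the compact set `Λ` is the intersection of the clopen subsets of `Λ`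
containing it, so if it missed the closed set `σ(A + M_S(z))`, some clopen `U` containing it
would miss it too; but `U` contains an eigenvalue of `A + M_S(z₀)` for the `z₀` that puts a point
of the component into `Λ`.
-/

open Filter Topology

theorem Polynomial.exists_mem_roots_norm_sub_lt_of_norm_eval_lt {K : Type*} [NormedField K]
    {p : K[X]} (hm : p.Monic) (hs : p.Splits) {a : K} {r : ℝ} (hr : 0 ≤ r)
    (h : ‖p.eval a‖ < r ^ p.natDegree) : ∃ b ∈ p.roots, ‖a - b‖ < r := by
  by_contra! hfar
  refine h.not_ge ?_
  calc r ^ p.natDegree = (p.roots.map fun _ => r).prod := by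
        simp [hs.natDegree_eq_card_roots]
    _ ≤ (p.roots.map fun b => ‖a - b‖).prod :=
        Multiset.prod_map_le_prod_map₀ _ _ (fun _ _ => hr) hfar
    _ = ‖p.eval a‖ := by
        rw [hs.eval_eq_prod_roots_of_monic hm]
        exact p.roots.prod_hom' (normHom (α := K)) (a - ·)

section BanachAlgebra

variable {A : Type*} [NormedRing A] [NormedAlgebra ℂ A] [CompleteSpace A]

theorem isClosed_setOf_mem_spectrum : IsClosed {p : A × ℂ | p.2 ∈ spectrum ℂ p.1} := by
  have hunits : IsOpen {p : A × ℂ | IsUnit (algebraMap ℂ A p.2 - p.1)} :=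
    Units.isOpen.preimage (by fun_prop)
  simpa only [← isOpen_compl_iff, compl_ofPred, spectrum.mem_iff, not_not] using hunits

variable {X : Type*} [TopologicalSpace X] [CompactSpace X] {f : X → A}

theorem isCompact_setOf_mem_spectrum (hf : Continuous f) :
    IsCompact {p : X × ℂ | p.2 ∈ spectrum ℂ (f p.1)} := by
  obtain ⟨C, hC⟩ := isCompact_univ.exists_bound_of_continuousOn hf.continuousOn
  refine (isCompact_univ.prod (isCompact_closedBall (0 : ℂ) (C * ‖(1 : A)‖))).of_isClosed_subset
    (isClosed_setOf_mem_spectrum.preimage (f := fun p : X × ℂ => (f p.1, p.2)) (by fun_prop)) ?_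
  rintro ⟨x, μ⟩ hμ
  refine ⟨mem_univ x, Metric.closedBall_subset_closedBall ?_
    (spectrum.subset_closedBall_norm_mul (f x) hμ)⟩
  gcongr
  exact hC x (mem_univ x)

theorem isCompact_iUnion_spectrum (hf : Continuous f) :
    IsCompact (⋃ x, spectrum ℂ (f x)) := by
  convert (isCompact_setOf_mem_spectrum hf).image continuous_snd
  ext μ
  simp

theorem isClosed_setOf_spectrum_inter_nonempty [T2Space X] (hf : Continuous f) {F : Set ℂ}
    (hF : IsClosed F) : IsClosed {x | (spectrum ℂ (f x) ∩ F).Nonempty} := by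
  have hcomp := ((isCompact_setOf_mem_spectrum hf).inter_right
    (hF.preimage continuous_snd)).image continuous_fst
  convert hcomp.isClosed
  ext x
  simp [Set.Nonempty]

end BanachAlgebra

theorem exists_isClopen_mem_disjoint_of_disjoint_connectedComponent {Y : Type*}
    [TopologicalSpace Y] [CompactSpace Y] [T2Space Y] {y : Y} {C : Set Y} (hC : IsClosed C)
    (h : Disjoint (connectedComponent y) C) : ∃ U, IsClopen U ∧ y ∈ U ∧ Disjoint U C := by
  rw [connectedComponent_eq_iInter_isClopen, disjoint_iff_inter_eq_empty, inter_comm] at h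
  obtain ⟨u, hu⟩ := hC.isCompact.elim_finite_subfamily_closed _ (fun s => s.2.1.1) h
  refine ⟨⋂ s ∈ u, s.1, isClopen_biInter_finset fun s _ => s.2.1,
    mem_iInter₂.mpr fun s _ => s.2.2, ?_⟩
  rw [disjoint_iff_inter_eq_empty, inter_comm, hu]

namespace Matrix

variable {ι : Type*} [Fintype ι] [DecidableEq ι]

theorem exists_mem_spectrum_norm_sub_lt (M : Matrix ι ι ℂ) (μ : ℂ) {r : ℝ} (hr : 0 ≤ r)
    (h : ‖M.charpoly.eval μ‖ < r ^ Fintype.card ι) : ∃ ν ∈ spectrum ℂ M, ‖μ - ν‖ < r := by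
  rw [← M.charpoly_natDegree_eq_dim] at h
  obtain ⟨ν, hν, hμν⟩ := exists_mem_roots_norm_sub_lt_of_norm_eval_lt M.charpoly_monic
    (IsAlgClosed.splits _) hr h
  exact ⟨ν, mem_spectrum_iff_isRoot_charpoly.mpr (isRoot_of_mem_roots hν), hμν⟩

variable {X : Type*} [TopologicalSpace X] {f : X → Matrix ι ι ℂ}

theorem isOpen_setOf_spectrum_inter_nonempty (hf : Continuous f) {V : Set ℂ} (hV : IsOpen V) :
    IsOpen {x | (spectrum ℂ (f x) ∩ V).Nonempty} := by
  refine isOpen_iff_mem_nhds.mpr ?_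
  rintro x ⟨μ, hμ, hμV⟩
  obtain ⟨r, hr, hball⟩ := Metric.isOpen_iff.mp hV μ hμV
  have hcont : Continuous fun y => (f y).charpoly.eval μ := by
    simp_rw [eval_charpoly]
    exact (continuous_const.sub hf).matrix_det
  have hroot : (f x).charpoly.eval μ = 0 := mem_spectrum_iff_isRoot_charpoly.mp hμ
  have hsmall : ∀ᶠ y in 𝓝 x, ‖(f y).charpoly.eval μ‖ < r ^ Fintype.card ι :=
    hcont.norm.continuousAt.eventually_lt continuousAt_const (by simpa [hroot] using pow_pos hr _)
  filter_upwards [hsmall] with y hy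
  obtain ⟨ν, hν, hμν⟩ := exists_mem_spectrum_norm_sub_lt (f y) μ hr.le hy
  exact ⟨ν, hν, hball (by rwa [Metric.mem_ball, dist_comm, dist_eq_norm])⟩

section Compact

variable [CompactSpace X] [T2Space X] [PreconnectedSpace X]

-- Any Banach algebra norm on matrices will do: it only serves to apply the Banach algebra lemmas above.
attribute [local instance] Matrix.linftyOpNormedRing Matrix.linftyOpNormedAlgebra

theorem spectrum_inter_nonempty_of_isClopen (hf : Continuous f)
    {U : Set (⋃ x, spectrum ℂ (f x))} (hU : IsClopen U) {x₀ : X}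
    (h₀ : ∃ μ ∈ U, ↑μ ∈ spectrum ℂ (f x₀)) (x : X) : ∃ μ ∈ U, ↑μ ∈ spectrum ℂ (f x) := by
  obtain ⟨V, hV, hVU⟩ := isOpen_induced_iff.mp hU.isOpen
  have hF : IsClosed ((↑) '' U : Set ℂ) :=
    (isCompact_iUnion_spectrum hf).isClosed.isClosedMap_subtype_val _ hU.isClosed
  have hopen : {y | ∃ μ ∈ U, ↑μ ∈ spectrum ℂ (f y)} = {y | (spectrum ℂ (f y) ∩ V).Nonempty} := by
    ext y
    subst hVU
    exact ⟨fun ⟨μ, hμV, hμ⟩ => ⟨μ, hμ, hμV⟩,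
      fun ⟨μ, hμ, hμV⟩ => ⟨⟨μ, mem_iUnion_of_mem y hμ⟩, hμV, hμ⟩⟩
  have hclosed : {y | ∃ μ ∈ U, ↑μ ∈ spectrum ℂ (f y)} =
      {y | (spectrum ℂ (f y) ∩ (↑) '' U).Nonempty} := by
    ext y
    exact ⟨fun ⟨μ, hμU, hμ⟩ => ⟨μ, hμ, μ, hμU, rfl⟩,
      fun ⟨_, hμ, μ, hμU, hμeq⟩ => ⟨μ, hμU, hμeq ▸ hμ⟩⟩
  have hG : IsClopen {y | ∃ μ ∈ U, ↑μ ∈ spectrum ℂ (f y)} :=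
    ⟨hclosed ▸ isClosed_setOf_spectrum_inter_nonempty hf hF,
      hopen ▸ isOpen_setOf_spectrum_inter_nonempty hf hV⟩
  exact eq_univ_iff_forall.mp (hG.eq_univ ⟨x₀, h₀⟩) x

theorem connectedComponentIn_iUnion_spectrum_inter_nonempty (hf : Continuous f) {w : ℂ}
    (hw : w ∈ ⋃ x, spectrum ℂ (f x)) (x : X) :
    (connectedComponentIn (⋃ x, spectrum ℂ (f x)) w ∩ spectrum ℂ (f x)).Nonempty := by
  have : CompactSpace (⋃ x, spectrum ℂ (f x)) :=
    isCompact_iff_compactSpace.mp (isCompact_iUnion_spectrum hf)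
  rw [connectedComponentIn_eq_image hw]
  by_contra hdisj
  have hC : Disjoint (connectedComponent (⟨w, hw⟩ : ⋃ x, spectrum ℂ (f x)))
      ((↑) ⁻¹' spectrum ℂ (f x)) :=
    disjoint_left.mpr fun μ hμ hμx => hdisj ⟨μ, mem_image_of_mem _ hμ, hμx⟩
  obtain ⟨U, hU, hwU, hUdisj⟩ := exists_isClopen_mem_disjoint_of_disjoint_connectedComponent
    ((spectrum.isClosed (f x)).preimage continuous_subtype_val) hC
  obtain ⟨x₀, hx₀⟩ := mem_iUnion.mp hw
  obtain ⟨μ, hμU, hμx⟩ := spectrum_inter_nonempty_of_isClopen hf hU ⟨_, hwU, hx₀⟩ x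
  exact hUdisj.notMem_of_mem_left hμU hμx

end Compact

end Matrix

theorem continuous_MS {n : ℕ} (S : Finset (Fin n × Fin n)) : Continuous (MS S) := by
  refine continuous_pi fun i => continuous_pi fun j => ?_
  by_cases h : (i, j) ∈ S
  · simp only [MS, dif_pos h]
    fun_prop
  · simp only [MS, dif_neg h]
    fun_prop

@[simp]
theorem MS_zero {n : ℕ} (S : Finset (Fin n × Fin n)) : MS S 0 = 0 := by
  ext i j
  by_cases h : (i, j) ∈ S <;> simp [MS, h]

theorem structPseudo_eq_iUnion {n : ℕ} (A : Matrix (Fin n) (Fin n) ℂ)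
    (S : Finset (Fin n × Fin n)) (ε : ℝ) :
    structPseudo A S ε = ⋃ z : Metric.closedBall (0 : EuclideanSpace ℂ S) ε,
      spectrum ℂ (A + MS S z) := by
  simp [structPseudo, iUnion_subtype]

/-- Every connected component of the structured ε-pseudospectrum contains an eigenvalue of
`A + M_S(z)` for each `z` with `‖z‖ ≤ ε`; in particular it contains an eigenvalue of `A`. -/
theorem component_contains_eigenvalue {n : ℕ} (A : Matrix (Fin n) (Fin n) ℂ)
    (S : Finset (Fin n × Fin n)) (ε : ℝ) (hε : 0 < ε) (T : Set ℂ)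
    (hT : ∃ w ∈ structPseudo A S ε, T = connectedComponentIn (structPseudo A S ε) w) :
    (∀ z : EuclideanSpace ℂ {p : Fin n × Fin n // p ∈ S}, ‖z‖ ≤ ε →
      ∃ μ ∈ T, μ ∈ spectrum ℂ (A + MS S z)) ∧ ∃ μ ∈ T, μ ∈ spectrum ℂ A := by
  obtain ⟨w, hw, rfl⟩ := hT
  have : CompactSpace (Metric.closedBall (0 : EuclideanSpace ℂ S) ε) :=
    isCompact_iff_compactSpace.mp (isCompact_closedBall _ _)
  have : PreconnectedSpace (Metric.closedBall (0 : EuclideanSpace ℂ S) ε) :=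
    Subtype.preconnectedSpace (convex_closedBall _ _).isPreconnected
  have hf : Continuous fun z : Metric.closedBall (0 : EuclideanSpace ℂ S) ε => A + MS S z :=
    continuous_const.add ((continuous_MS S).comp continuous_subtype_val)
  have hall : ∀ z : EuclideanSpace ℂ S, ‖z‖ ≤ ε →
      ∃ μ ∈ connectedComponentIn (structPseudo A S ε) w, μ ∈ spectrum ℂ (A + MS S z) := by
    intro z hz
    rw [structPseudo_eq_iUnion] at hw ⊢
    exact Matrix.connectedComponentIn_iUnion_spectrum_inter_nonempty hf hw
      ⟨z, mem_closedBall_zero_iff.mpr hz⟩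
  refine ⟨hall, ?_⟩
  simpa using hall 0 (by simpa using hε.le)
end

section
/- Let f be a monic complex polynomial of degree n, and for 0 ≤ k ≤ n+1 let d_k := deg gcd(f, f', …, f^{(k)}) with d₀ := n. Then for 1 ≤ k ≤ n, the number ρ_k of distinct roots of f of multiplicity exactly k satisfies ρ_k = d_{k−1} − 2 d_k + d_{k+1}. -/
/-!
In characteristic zero a root of multiplicity `m` of `f` is a root of `f^{(j)}` of multiplicity
exactly `m - j` for `j ≤ m`, so it has multiplicity `m - k` (truncated) in
`gcd(f, f′, …, f^{(k)})`. Over `ℂ` this gives `d_k = ∑_α (m_α - k)`, and for `m ≥ 1` the second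
difference `(m - (k - 1)) - 2 (m - k) + (m - (k + 1))` of truncated differences is `1` if
`m = k` and `0` otherwise.
-/

open Polynomial

/-- `gcdDerivs f k` is the monic-normalized gcd of `f, f′, …, f^{(k)}`. -/
noncomputable def gcdDerivs (f : Polynomial ℂ) : ℕ → Polynomial ℂ
  | 0 => f
  | (k+1) => EuclideanDomain.gcd (gcdDerivs f k) (Polynomial.derivative^[k+1] f)

theorem forall_pow_dvd_iterate_derivative_iff {R : Type*} [CommRing R] [NoZeroDivisors R]
    [CharZero R] {p : R[X]} (hp : p ≠ 0) (t : R) (n k : ℕ) :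
    (∀ i ≤ k, (X - C t) ^ n ∣ derivative^[i] p) ↔ n ≤ p.rootMultiplicity t - k := by
  constructor
  · intro h
    rcases Nat.eq_zero_or_pos n with rfl | hn
    · exact Nat.zero_le _
    have hroot : ∀ l ≤ k + (n - 1), (derivative^[l] p).IsRoot t := by
      intro l hl
      obtain ⟨i, j, hi, hj, rfl⟩ : ∃ i j, i ≤ k ∧ j < n ∧ l = j + i :=
        ⟨min l k, l - min l k, min_le_right _ _, by omega, by omega⟩
      rw [Function.iterate_add_apply, ← dvd_iff_isRoot]
      exact (dvd_pow_self _ (by omega)).trans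
        (pow_sub_dvd_iterate_derivative_of_pow_dvd j (h i hi))
    have := (lt_rootMultiplicity_iff_isRoot_iterate_derivative hp).2 hroot
    omega
  · intro h i hi
    exact (pow_dvd_pow _ (by omega)).trans
      (pow_sub_dvd_iterate_derivative_of_pow_dvd i (p.pow_rootMultiplicity_dvd t))

theorem natDegree_eq_sum_rootMultiplicity_of_dvd {K : Type*} [Field K] [IsAlgClosed K]
    [DecidableEq K] {f g : K[X]} (hf : f ≠ 0) (hgf : g ∣ f) :
    g.natDegree = ∑ a ∈ f.roots.toFinset, g.rootMultiplicity a := by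
  have hg : g ≠ 0 := ne_zero_of_dvd_ne_zero hf hgf
  have hsub : ∀ a ∈ g.roots, a ∈ f.roots.toFinset := fun a ha => by
    rw [Multiset.mem_toFinset, mem_roots hf]
    exact ((mem_roots hg).1 ha).dvd hgf
  rw [(IsAlgClosed.splits g).natDegree_eq_card_roots, ← Multiset.sum_count_eq_card hsub]
  simp only [count_roots]

theorem dvd_gcdDerivs_iff {f g : ℂ[X]} {k : ℕ} :
    g ∣ gcdDerivs f k ↔ ∀ i ≤ k, g ∣ derivative^[i] f := by
  induction k with
  | zero => simp [gcdDerivs]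
  | succ k ih =>
    have dvd_gcd_iff {a b : ℂ[X]} : g ∣ EuclideanDomain.gcd a b ↔ g ∣ a ∧ g ∣ b :=
      ⟨fun h => ⟨h.trans (EuclideanDomain.gcd_dvd_left a b),
        h.trans (EuclideanDomain.gcd_dvd_right a b)⟩, fun h => EuclideanDomain.dvd_gcd h.1 h.2⟩
    rw [gcdDerivs, dvd_gcd_iff, ih]
    simp only [Nat.le_succ_iff, or_imp, forall_and, forall_eq]

theorem gcdDerivs_dvd (f : ℂ[X]) (k : ℕ) : gcdDerivs f k ∣ f :=
  dvd_gcdDerivs_iff.1 dvd_rfl 0 k.zero_le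

theorem gcdDerivs_ne_zero {f : ℂ[X]} (hf : f ≠ 0) (k : ℕ) : gcdDerivs f k ≠ 0 :=
  ne_zero_of_dvd_ne_zero hf (gcdDerivs_dvd f k)

theorem rootMultiplicity_gcdDerivs {f : ℂ[X]} (hf : f ≠ 0) (t : ℂ) (k : ℕ) :
    (gcdDerivs f k).rootMultiplicity t = f.rootMultiplicity t - k :=
  eq_of_forall_le_iff fun n => by
    rw [le_rootMultiplicity_iff (gcdDerivs_ne_zero hf k), dvd_gcdDerivs_iff,
      forall_pow_dvd_iterate_derivative_iff hf]

theorem natDegree_gcdDerivs {f : ℂ[X]} (hf : f ≠ 0) (k : ℕ) :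
    (gcdDerivs f k).natDegree = ∑ a ∈ f.roots.toFinset, (f.rootMultiplicity a - k) := by
  rw [natDegree_eq_sum_rootMultiplicity_of_dvd hf (gcdDerivs_dvd f k)]
  simp only [rootMultiplicity_gcdDerivs hf]

theorem card_roots_multiplicity_eq_general {n : ℕ} (f : Polynomial ℂ) (hf : f.Monic) :
    ∀ k, 1 ≤ k → k ≤ n →
      ((f.roots.toFinset.filter (fun α => f.rootMultiplicity α = k)).card : ℤ) =
        ((gcdDerivs f (k - 1)).natDegree : ℤ) - 2 * ((gcdDerivs f k).natDegree : ℤ) +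
          ((gcdDerivs f (k + 1)).natDegree : ℤ) := by
  intro k hk _
  have hf0 : f ≠ 0 := hf.ne_zero
  simp only [Finset.card_filter, natDegree_gcdDerivs hf0, Nat.cast_sum, Finset.mul_sum,
    ← Finset.sum_sub_distrib, ← Finset.sum_add_distrib]
  refine Finset.sum_congr rfl fun a ha => ?_
  have : 0 < f.rootMultiplicity a :=
    (rootMultiplicity_pos hf0).2 ((mem_roots hf0).1 (Multiset.mem_toFinset.1 ha))
  split_ifs <;> omega

/-- With `d_k := deg gcd(f, f′, …, f^{(k)})`, the number `ρ_k` of distinct roots of `f` of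
multiplicity exactly `k` satisfies `ρ_k = d_{k-1} - 2 d_k + d_{k+1}` for `1 ≤ k ≤ n`. -/
theorem card_roots_multiplicity_eq {n : ℕ} (hn : 1 ≤ n) (f : Polynomial ℂ) (hf : f.Monic)
    (hdeg : f.natDegree = n) :
    ∀ k, 1 ≤ k → k ≤ n →
      ((f.roots.toFinset.filter (fun α => f.rootMultiplicity α = k)).card : ℤ) =
        ((gcdDerivs f (k - 1)).natDegree : ℤ) - 2 * ((gcdDerivs f k).natDegree : ℤ) +
          ((gcdDerivs f (k + 1)).natDegree : ℤ) :=
  card_roots_multiplicity_eq_general f hf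
end

section
/- Let A ∈ ℂ^{n×n}, S a structure set, ε > 0, and let T be a connected component of the strict structured ε-pseudospectrum Λ'_{S,ε}(A). Then for every z ∈ ℂ^s with ‖z‖ < ε, the sum of the algebraic multiplicities of the eigenvalues of A + M_S(z) lying in T equals the sum of the algebraic multiplicities of the eigenvalues of A lying in T. -/
open Matrix Polynomial Set
open scoped Classical

/-!
Along the segment `t ↦ A + M_S(t z)`, `t ∈ [0, 1]`, every eigenvalue stays in `Λ'_{S,ε}(A)`, and
the union `K` of all these spectra is compact. Each connected component of `K` lies in a single
component of `Λ'_{S,ε}(A)`, and in a compact Hausdorff space components are intersections of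
clopen sets; hence some open `U ⊆ ℂ` whose boundary misses `K` contains exactly those eigenvalues
of `A` and of `A + M_S(z)` that lie in `T`. The number of roots, with multiplicity, that a
continuous family of monic polynomials has in a set whose boundary no root ever meets is locally
constant, hence the same at `t = 0` and `t = 1`.
-/

open Filter Topology

namespace Matrix

variable {ι R : Type*} [Fintype ι] [DecidableEq ι] [CommRing R] [TopologicalSpace R]
  [IsTopologicalRing R]

theorem continuous_charpoly_coeff (k : ℕ) :
    Continuous fun M : Matrix ι ι R => M.charpoly.coeff k := by
  have h (M : Matrix ι ι R) : M.charpoly.coeff k = MvPolynomial.eval (fun ij => M ij.1 ij.2)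
      (MvPolynomial.map (Int.castRingHom R) ((charpoly.univ ℤ ι).coeff k)) := by
    rw [← MvPolynomial.eval₂_eq_eval_map, ← MvPolynomial.coe_eval₂Hom,
      charpoly.univ_coeff_eval₂Hom]
    rfl
  simp_rw [h]
  exact (MvPolynomial.continuous_eval _).comp
    (continuous_pi fun ij => continuous_id.matrix_elem ij.1 ij.2)

end Matrix

theorem Multiset.exists_eq_map_univ {α : Type*} {s : Multiset α} {n : ℕ} (h : card s = n) :
    ∃ v : Fin n → α, s = Finset.univ.val.map v := by
  subst h
  refine ⟨fun i => s.toList.get (i.cast (by simp)), ?_⟩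
  rw [Fin.univ_val_map]
  conv_lhs => rw [← Multiset.coe_toList s]
  exact congrArg _ (List.ext_get (by simp) (by simp))

theorem eventually_mem_iff_of_notMem_frontier {X : Type*} [TopologicalSpace X] {U : Set X}
    {z : X} (hz : z ∉ frontier U) : ∀ᶠ y in 𝓝 z, y ∈ U ↔ z ∈ U := by
  by_cases h : z ∈ U
  · have hint : z ∈ interior U := by_contra fun h' => hz ⟨subset_closure h, h'⟩
    filter_upwards [isOpen_interior.mem_nhds hint] with y hy
    exact iff_of_true (interior_subset hy) h
  · have hcl : z ∉ closure U := fun h' => hz ⟨h', fun hi => h (interior_subset hi)⟩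
    filter_upwards [isClosed_closure.isOpen_compl.mem_nhds hcl] with y hy
    exact iff_of_false (fun hyU => hy (subset_closure hyU)) h

theorem connectedComponent_subset_preimage_connectedComponentIn {X : Type*} [TopologicalSpace X]
    {K Λ : Set X} (hK : K ⊆ Λ) (y : K) :
    connectedComponent y ⊆ Subtype.val ⁻¹' connectedComponentIn Λ y := by
  rw [← image_subset_iff, ← connectedComponentIn_eq_image y.2]
  exact connectedComponentIn_mono _ hK

theorem exists_isClopen_forall_mem_iff {Y : Type*} [TopologicalSpace Y] [CompactSpace Y]
    [T2Space Y] {T F : Set Y} (hT : ∀ y ∈ T, connectedComponent y ⊆ T) (hF : F.Finite) :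
    ∃ V : Set Y, IsClopen V ∧ ∀ y ∈ F, y ∈ V ↔ y ∈ T := by
  obtain ⟨C, hC, hFTC, hCFT⟩ := exists_clopen_of_closed_subset_open
    (Z := ConnectedComponents.mk '' (F ∩ T)) (U := (ConnectedComponents.mk '' (F \ T))ᶜ)
    ((hF.subset inter_subset_left).image _).isClosed
    (hF.sdiff.image _).isClosed.isOpen_compl (by
      rintro _ ⟨a, ⟨-, ha⟩, rfl⟩ ⟨b, ⟨-, hb⟩, hab⟩
      exact hb (hT a ha (ConnectedComponents.coe_eq_coe.1 hab ▸ mem_connectedComponent)))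
  refine ⟨ConnectedComponents.mk ⁻¹' C, hC.preimage ConnectedComponents.continuous_coe,
    fun y hy => ⟨fun hyC => ?_, fun hyT => hFTC ⟨y, ⟨hy, hyT⟩, rfl⟩⟩⟩
  by_contra hyT
  exact hCFT hyC ⟨y, ⟨hy, hyT⟩, rfl⟩

theorem IsCompact.exists_forall_notMem_frontier {X : Type*} [TopologicalSpace X] [T2Space X]
    {K : Set X} (hK : IsCompact K) {V : Set K} (hV : IsClopen V) :
    ∃ U : Set X, (∀ z ∈ K, z ∉ frontier U) ∧ ∀ z : K, (z : X) ∈ U ↔ z ∈ V := by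
  have : CompactSpace K := isCompact_iff_compactSpace.mp hK
  obtain ⟨O₁, O₂, hO₁, hO₂, hVO₁, hVO₂, hO⟩ := SeparatedNhds.of_isCompact_isCompact
    (hV.isClosed.isCompact.image continuous_subtype_val)
    (hV.compl.isClosed.isCompact.image continuous_subtype_val)
    ((disjoint_image_iff Subtype.val_injective).2 disjoint_compl_right)
  have hmem (z : K) : (z : X) ∈ O₁ ↔ z ∈ V := by
    refine ⟨fun hz => by_contra fun hzV => ?_, fun hzV => hVO₁ ⟨z, hzV, rfl⟩⟩
    exact Set.disjoint_left.1 hO hz (hVO₂ ⟨z, hzV, rfl⟩)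
  refine ⟨O₁, fun z hz hzf => ?_, hmem⟩
  by_cases hzV : (⟨z, hz⟩ : K) ∈ V
  · exact hzf.2 (hO₁.interior_eq.symm ▸ (hmem ⟨z, hz⟩).2 hzV)
  · exact Set.disjoint_left.1 (hO.closure_left hO₂) hzf.1 (hVO₂ ⟨⟨z, hz⟩, hzV, rfl⟩)

namespace Polynomial

theorem sum_rootMultiplicity_filter {R : Type*} [CommRing R] [IsDomain R] [DecidableEq R]
    (p : R[X]) (P : R → Prop) [DecidablePred P] :
    ∑ a ∈ p.roots.toFinset.filter P, p.rootMultiplicity a = Multiset.card (p.roots.filter P) := by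
  rw [← Multiset.toFinset_sum_count_eq, Multiset.toFinset_filter]
  refine Finset.sum_congr rfl fun a ha => ?_
  rw [Multiset.count_filter_of_pos (Finset.mem_filter.1 ha).2, count_roots]

theorem Monic.norm_le_of_isRoot {K : Type*} [NormedField K] {p : K[X]} (hp : p.Monic) {a : K}
    (ha : p.IsRoot a) : ‖a‖ ≤ 1 + ∑ i ∈ Finset.range p.natDegree, ‖p.coeff i‖ := by
  have hsup : (Finset.range p.natDegree).sup (‖p.coeff ·‖₊) ≤
      ∑ i ∈ Finset.range p.natDegree, ‖p.coeff i‖₊ :=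
    Finset.sup_le fun i hi =>
      Finset.single_le_sum (f := (‖p.coeff ·‖₊)) (fun _ _ => zero_le) hi
  have := (ha.norm_lt_cauchyBound hp.ne_zero).le
  rw [cauchyBound, hp.leadingCoeff, nnnorm_one, div_one] at this
  have hnn : ‖a‖₊ ≤ 1 + ∑ i ∈ Finset.range p.natDegree, ‖p.coeff i‖₊ :=
    this.trans (by rw [add_comm]; gcongr)
  simpa only [NNReal.coe_add, NNReal.coe_sum, NNReal.coe_one, coe_nnnorm] using
    NNReal.coe_le_coe.2 hnn

theorem roots_prod_X_sub_C_univ {ι : Type*} [Fintype ι] {R : Type*} [CommRing R] [IsDomain R]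
    (w : ι → R) : (∏ i, (X - C (w i))).roots = Finset.univ.val.map w := by
  rw [← roots_multiset_prod_X_sub_C (Finset.univ.val.map w), Multiset.map_map]
  rfl

theorem eq_prod_X_sub_C_of_roots_eq_map {ι K : Type*} [Fintype ι] [Field K] [IsAlgClosed K]
    {p : K[X]} (hp : p.Monic) {v : ι → K} (hv : p.roots = Finset.univ.val.map v) :
    p = ∏ i, (X - C (v i)) := by
  conv_lhs => rw [(IsAlgClosed.splits p).eq_prod_roots_of_monic hp, hv, Multiset.map_map]
  rfl

theorem continuous_coeff_prod_X_sub_C {ι R : Type*} [Fintype ι] [DecidableEq ι] [CommRing R]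
    [TopologicalSpace R] [IsTopologicalRing R] (k : ℕ) :
    Continuous fun w : ι → R => (∏ i, (X - C (w i))).coeff k := by
  simp_rw [← Matrix.charpoly_diagonal]
  exact (Matrix.continuous_charpoly_coeff k).comp continuous_id.matrix_diagonal

section ContinuousFamily

variable {Y : Type*} [TopologicalSpace Y] {n : ℕ} {p : Y → ℂ[X]}

theorem continuous_eval_of_continuous_coeff (hdeg : ∀ x, (p x).natDegree = n)
    (hcont : ∀ k, Continuous fun x => (p x).coeff k) :
    Continuous fun q : Y × ℂ => (p q.1).eval q.2 := by
  simp_rw [eval_eq_sum_range' (Nat.lt_succ_of_le (hdeg _).le)]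
  exact continuous_finsetSum _ fun i _ => ((hcont i).comp continuous_fst).mul
    (continuous_snd.pow i)

theorem exists_continuous_forall_norm_le_of_mem_roots (hmonic : ∀ x, (p x).Monic)
    (hdeg : ∀ x, (p x).natDegree = n) (hcont : ∀ k, Continuous fun x => (p x).coeff k) :
    ∃ b : Y → ℝ, Continuous b ∧ ∀ x, ∀ z ∈ (p x).roots, ‖z‖ ≤ b x :=
  ⟨_, continuous_const.add (continuous_finsetSum _ fun i _ => (hcont i).norm),
    fun x _ hz => hdeg x ▸ (hmonic x).norm_le_of_isRoot (isRoot_of_mem_roots hz)⟩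

theorem roots_eq_map_of_tendsto (hmonic : ∀ x, (p x).Monic)
    (hcont : ∀ k, Continuous fun x => (p x).coeff k) {l : Filter Y} [l.NeBot] {x₀ : Y}
    (hl : l ≤ 𝓝 x₀) {v : Y → Fin n → ℂ} (hv : ∀ x, (p x).roots = Finset.univ.val.map (v x))
    {w : Fin n → ℂ} (hw : Tendsto v l (𝓝 w)) : (p x₀).roots = Finset.univ.val.map w := by
  suffices p x₀ = ∏ i, (X - C (w i)) by rw [this, roots_prod_X_sub_C_univ]
  refine ext fun k => tendsto_nhds_unique (((hcont k).tendsto x₀).mono_left hl) ?_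
  simp_rw [fun x => eq_prod_X_sub_C_of_roots_eq_map (hmonic x) (hv x)]
  exact ((continuous_coeff_prod_X_sub_C k).tendsto w).comp hw

theorem eventually_card_filter_roots_eq (hmonic : ∀ x, (p x).Monic)
    (hdeg : ∀ x, (p x).natDegree = n) (hcont : ∀ k, Continuous fun x => (p x).coeff k)
    {U : Set ℂ} (hU : ∀ x, ∀ z ∈ (p x).roots, z ∉ frontier U) {𝒰 : Ultrafilter Y} {x₀ : Y}
    (h𝒰 : ↑𝒰 ≤ 𝓝 x₀) :
    ∀ᶠ x in 𝒰, Multiset.card ((p x).roots.filter (· ∈ U)) =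
      Multiset.card ((p x₀).roots.filter (· ∈ U)) := by
  choose v hv using fun x => Multiset.exists_eq_map_univ
    ((splits_iff_card_roots.1 (IsAlgClosed.splits (p x))).trans (hdeg x))
  have hv_mem (x : Y) (i : Fin n) : v x i ∈ (p x).roots :=
    hv x ▸ Multiset.mem_map_of_mem _ (Finset.mem_univ_val i)
  obtain ⟨b, hb, hroots⟩ := exists_continuous_forall_norm_le_of_mem_roots hmonic hdeg hcont
  have hbounded : ∀ᶠ x in 𝒰, v x ∈ univ.pi fun _ => Metric.closedBall 0 (b x₀ + 1) := by
    filter_upwards [h𝒰 (hb.continuousAt.eventually_lt continuousAt_const (lt_add_one (b x₀)))]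
      with x hx i _
    exact mem_closedBall_zero_iff.2 ((hroots x _ (hv_mem x i)).trans hx.le)
  obtain ⟨w, -, hw⟩ := (isCompact_univ_pi fun _ => isCompact_closedBall _ _).ultrafilter_le_nhds
    (𝒰.map v) (by rwa [Ultrafilter.coe_map, le_principal_iff])
  have hw₀ := roots_eq_map_of_tendsto hmonic hcont h𝒰 hv hw
  have hw_mem (i : Fin n) : w i ∈ (p x₀).roots :=
    hw₀ ▸ Multiset.mem_map_of_mem _ (Finset.mem_univ_val i)
  have hUw : ∀ᶠ x in 𝒰, ∀ i, (v x i ∈ U ↔ w i ∈ U) := eventually_all.2 fun i =>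
    (((continuous_apply i).tendsto w).comp hw).eventually
      (eventually_mem_iff_of_notMem_frontier (hU x₀ _ (hw_mem i)))
  filter_upwards [hUw] with x hx
  simp only [hv x, hw₀, Multiset.filter_map, Multiset.card_map]
  exact congrArg _ (Multiset.filter_congr fun i _ => hx i)

theorem isLocallyConstant_card_filter_roots (hmonic : ∀ x, (p x).Monic)
    (hdeg : ∀ x, (p x).natDegree = n) (hcont : ∀ k, Continuous fun x => (p x).coeff k)
    {U : Set ℂ} (hU : ∀ x, ∀ z ∈ (p x).roots, z ∉ frontier U) :
    IsLocallyConstant fun x => Multiset.card ((p x).roots.filter (· ∈ U)) :=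
  (IsLocallyConstant.iff_eventually_eq _).2 fun _ => mem_iff_ultrafilter.2 fun _ h𝒰 =>
    eventually_card_filter_roots_eq hmonic hdeg hcont hU h𝒰

theorem isCompact_setOf_exists_mem_roots [CompactSpace Y] (hmonic : ∀ x, (p x).Monic)
    (hdeg : ∀ x, (p x).natDegree = n) (hcont : ∀ k, Continuous fun x => (p x).coeff k) :
    IsCompact {z | ∃ x, z ∈ (p x).roots} := by
  obtain ⟨b, hb, hroots⟩ := exists_continuous_forall_norm_le_of_mem_roots hmonic hdeg hcont
  obtain ⟨R, hR⟩ := (isCompact_range hb).bddAbove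
  have hproj :
      {z | ∃ x, z ∈ (p x).roots} = Prod.snd '' {q : Y × ℂ | (p q.1).eval q.2 = 0} := by
    ext z
    simp [mem_roots (hmonic _).ne_zero]
  refine Metric.isCompact_of_isClosed_isBounded ?_
    ((Metric.isBounded_closedBall (x := 0) (r := R)).subset ?_)
  · rw [hproj]
    exact isClosedMap_snd_of_compactSpace _
      (isClosed_eq (continuous_eval_of_continuous_coeff hdeg hcont) continuous_const)
  · rintro z ⟨x, hz⟩
    exact mem_closedBall_zero_iff.2 ((hroots x z hz).trans (hR ⟨x, rfl⟩))

end ContinuousFamily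

end Polynomial

theorem MS_smul {n : ℕ} (S : Finset (Fin n × Fin n)) (c : ℂ)
    (z : EuclideanSpace ℂ {p : Fin n × Fin n // p ∈ S}) : MS S (c • z) = c • MS S z := by
  ext i j
  simp only [MS, Matrix.smul_apply, PiLp.smul_apply, smul_eq_mul]
  split_ifs <;> simp

theorem spectrum_add_smul_MS_subset {n : ℕ} (A : Matrix (Fin n) (Fin n) ℂ)
    {S : Finset (Fin n × Fin n)} {ε : ℝ} {z : EuclideanSpace ℂ {p : Fin n × Fin n // p ∈ S}}
    (hz : ‖z‖ < ε) {c : ℂ} (hc : ‖c‖ ≤ 1) :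
    spectrum ℂ (A + c • MS S z) ⊆ structPseudoStrict A S ε := by
  rw [← MS_smul]
  refine subset_biUnion_of_mem (u := fun z => spectrum ℂ (A + MS S z)) ?_
  rw [mem_setOf_eq, norm_smul]
  exact (mul_le_of_le_one_left (norm_nonneg z) hc).trans_lt hz

theorem multiplicity_conservation_general {n : ℕ} (A : Matrix (Fin n) (Fin n) ℂ)
    (S : Finset (Fin n × Fin n)) (ε : ℝ) (T : Set ℂ)
    (hT : ∃ w ∈ structPseudoStrict A S ε,
      T = connectedComponentIn (structPseudoStrict A S ε) w) :
    ∀ z : EuclideanSpace ℂ {p : Fin n × Fin n // p ∈ S}, ‖z‖ < ε →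
      ∑ ζ ∈ (A + MS S z).charpoly.roots.toFinset.filter (fun ζ => ζ ∈ T),
          (A + MS S z).charpoly.rootMultiplicity ζ =
        ∑ α ∈ A.charpoly.roots.toFinset.filter (fun α => α ∈ T),
          A.charpoly.rootMultiplicity α := by
  obtain ⟨w, -, rfl⟩ := hT
  intro z hz
  set Λ := structPseudoStrict A S ε
  let p : unitInterval → ℂ[X] := fun t => (A + ((t : ℝ) : ℂ) • MS S z).charpoly
  have hmonic (t) : (p t).Monic := charpoly_monic _
  have hdeg (t) : (p t).natDegree = n := by simp [p, charpoly_natDegree_eq_dim]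
  have hcont (k) : Continuous fun t => (p t).coeff k :=
    (continuous_charpoly_coeff k).comp (by fun_prop)
  have hKΛ : {ζ | ∃ t, ζ ∈ (p t).roots} ⊆ Λ := fun ζ ⟨t, hζ⟩ =>
    spectrum_add_smul_MS_subset A hz (by simpa [abs_of_nonneg t.2.1] using t.2.2)
      (mem_spectrum_iff_isRoot_charpoly.2 (isRoot_of_mem_roots hζ))
  have hK := isCompact_setOf_exists_mem_roots hmonic hdeg hcont
  have := isCompact_iff_compactSpace.mp hK
  obtain ⟨V, hV, hVT⟩ := exists_isClopen_forall_mem_iff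
    (T := Subtype.val ⁻¹' connectedComponentIn Λ w)
    (F := Subtype.val ⁻¹' ↑((p 0).roots + (p 1).roots).toFinset)
    (fun y hy => connectedComponentIn_eq hy ▸
      connectedComponent_subset_preimage_connectedComponentIn hKΛ y)
    ((Finset.finite_toSet _).preimage Subtype.val_injective.injOn)
  obtain ⟨U, hU, hUV⟩ := hK.exists_forall_notMem_frontier hV
  have hfilter (t) (ht : t = 0 ∨ t = 1) :
      (p t).roots.filter (· ∈ connectedComponentIn Λ w) = (p t).roots.filter (· ∈ U) :=
    Multiset.filter_congr fun ζ hζ => ((hUV ⟨ζ, t, hζ⟩).trans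
      (hVT ⟨ζ, t, hζ⟩ (by rcases ht with rfl | rfl <;> simp [hζ]))).symm
  have hconst := (isLocallyConstant_card_filter_roots hmonic hdeg hcont
    fun t ζ hζ => hU ζ ⟨t, hζ⟩).apply_eq_of_preconnectedSpace 1 0
  have hp0 : p 0 = A.charpoly := by simp [p]
  have hp1 : p 1 = (A + MS S z).charpoly := by simp [p]
  rw [sum_rootMultiplicity_filter, sum_rootMultiplicity_filter, ← hp0, ← hp1,
    hfilter 0 (.inl rfl), hfilter 1 (.inr rfl)]
  exact hconst

/-- On each connected component `T` of the strict structured ε-pseudospectrum, the sum of the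
algebraic multiplicities of the eigenvalues of `A + M_S(z)` lying in `T` equals the sum of the
algebraic multiplicities of the eigenvalues of `A` lying in `T`, for every `‖z‖ < ε`. -/
theorem multiplicity_conservation {n : ℕ} (A : Matrix (Fin n) (Fin n) ℂ)
    (S : Finset (Fin n × Fin n)) (ε : ℝ) (hε : 0 < ε) (T : Set ℂ)
    (hT : ∃ w ∈ structPseudoStrict A S ε,
      T = connectedComponentIn (structPseudoStrict A S ε) w) :
    ∀ z : EuclideanSpace ℂ {p : Fin n × Fin n // p ∈ S}, ‖z‖ < ε →
      ∑ ζ ∈ (A + MS S z).charpoly.roots.toFinset.filter (fun ζ => ζ ∈ T),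
          (A + MS S z).charpoly.rootMultiplicity ζ =
        ∑ α ∈ A.charpoly.roots.toFinset.filter (fun α => α ∈ T),
          A.charpoly.rootMultiplicity α :=
  multiplicity_conservation_general A S ε T hT
end
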